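/- arXiv:2604.17043 — 6 statements merged into one kernel-verified Lean document; each statement's English description precedes it below -/
import Mathlib

section
/- Let A be a finite-dimensional real Leibniz algebra. For all a, b ∈ A, the conjugation identity e^{ad_a} ∘ ad_b ∘ e^{-ad_a} = ad_{e^{ad_a}(b)} holds as linear maps A → A. -/
/-!
The right Leibniz identity says `ad_{ad_a x} = ad_a ∘ ad_x - ad_x ∘ ad_a`: the map `x ↦ ad_x`
intertwines `ad_a` on `A` with the commutator `[ad_a, ·]` on `End A`. Exponentials of
continuous operators respect such intertwinings, so `ad_{e^{ad_a} b} = e^{[ad_a, ·]} ad_b`.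
Finally `[T, ·]` is the difference of the commuting left and right multiplications by `T`, whence
`e^{[T, ·]} U = e^T U e^{-T}`.
-/

open NormedSpace ContinuousLinearMap Function

section Operator

variable {𝕂 : Type*} [RCLike 𝕂] {E F : Type*}
  [NormedAddCommGroup E] [NormedSpace 𝕂 E] [CompleteSpace E]
  [NormedAddCommGroup F] [NormedSpace 𝕂 F] [CompleteSpace F]

theorem hasSum_exp_apply (S : E →L[𝕂] E) (v : E) :
    HasSum (fun n => (n.factorial⁻¹ : 𝕂) • (S ^ n) v) (exp S v) := by
  simpa using (exp_series_hasSum_exp' (𝕂 := 𝕂) S).mapL (apply 𝕂 E v)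

theorem ContinuousLinearMap.semiconj_exp (f : E →L[𝕂] F) {S : E →L[𝕂] E} {T : F →L[𝕂] F}
    (h : Semiconj f S T) : Semiconj f (exp S : E →L[𝕂] E) (exp T : F →L[𝕂] F) := by
  intro v
  have hpow (n : ℕ) : f ((S ^ n) v) = (T ^ n) (f v) := by
    simp only [FunLike.coe_pow_eq_iterate, h.iterate_right n v]
  refine ((hasSum_exp_apply S v).mapL f).unique ?_
  simpa only [map_smul, hpow] using hasSum_exp_apply (𝕂 := 𝕂) T (f v)

end Operator

section Multiplication

variable {𝕂 𝔸 : Type*} [NontriviallyNormedField 𝕂] [NormedRing 𝔸] [NormedAlgebra 𝕂 𝔸]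

theorem ContinuousLinearMap.pow_mul_left (x : 𝔸) (n : ℕ) :
    mul 𝕂 𝔸 x ^ n = mul 𝕂 𝔸 (x ^ n) := by
  induction n with
  | zero => ext; simp
  | succ n ih => ext y; simp [pow_succ', ih, mul_assoc]

theorem ContinuousLinearMap.pow_mul_right (x : 𝔸) (n : ℕ) :
    (mul 𝕂 𝔸).flip x ^ n = (mul 𝕂 𝔸).flip (x ^ n) := by
  induction n with
  | zero => ext; simp
  | succ n ih =>
    ext y
    rw [pow_succ', mul_apply_eq_comp, ih]
    simp [pow_succ, mul_assoc]

end Multiplication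

section Exponential

variable {𝕂 𝔸 : Type*} [RCLike 𝕂] [NormedRing 𝔸] [NormedAlgebra 𝕂 𝔸] [CompleteSpace 𝔸]

theorem exp_mul_apply (x y : 𝔸) : exp (mul 𝕂 𝔸 x) y = exp x * y := by
  refine (hasSum_exp_apply _ y).unique ?_
  simpa only [ContinuousLinearMap.pow_mul_left, mul_apply', smul_mul_assoc] using
    (exp_series_hasSum_exp' (𝕂 := 𝕂) x).mul_right y

theorem exp_flip_mul_apply (x y : 𝔸) : exp ((mul 𝕂 𝔸).flip x) y = y * exp x := by
  refine (hasSum_exp_apply _ y).unique ?_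
  simpa only [ContinuousLinearMap.pow_mul_right, flip_apply, mul_apply', mul_smul_comm] using
    (exp_series_hasSum_exp' (𝕂 := 𝕂) x).mul_left y

theorem exp_mul_sub_flip_mul_apply (x y : 𝔸) :
    exp (mul 𝕂 𝔸 x - (mul 𝕂 𝔸).flip x) y = exp x * y * exp (-x) := by
  have hcomm : Commute (mul 𝕂 𝔸 x) (-(mul 𝕂 𝔸).flip x) := by
    refine Commute.neg_right ?_
    ext z
    simp [mul_assoc]
  have hexp := exp_add_of_commute_of_mem_ball (𝕂 := 𝕂) hcomm
    (by simp [expSeries_radius_eq_top]) (by simp [expSeries_radius_eq_top])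
  rw [sub_eq_add_neg, hexp, mul_apply_eq_comp, ← map_neg, exp_flip_mul_apply, exp_mul_apply,
    mul_assoc]

end Exponential

/-- `e^{ad_a} ∘ ad_b ∘ e^{-ad_a} = ad_{e^{ad_a}(b)}` in a
finite-dimensional real Leibniz algebra, where `ad_a b = [b,a]`. -/
theorem exp_ad_conj
    {A : Type*} [NormedAddCommGroup A] [NormedSpace ℝ A] [FiniteDimensional ℝ A]
    (br : A →ₗ[ℝ] A →ₗ[ℝ] A)
    (leib : ∀ x y z : A, br (br x y) z = br (br x z) y + br x (br y z))
    (a b : A) :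
    NormedSpace.exp (LinearMap.toContinuousLinearMap (br.flip a)) *
        LinearMap.toContinuousLinearMap (br.flip b) *
        NormedSpace.exp (-(LinearMap.toContinuousLinearMap (br.flip a))) =
      LinearMap.toContinuousLinearMap
        (br.flip (NormedSpace.exp (LinearMap.toContinuousLinearMap (br.flip a)) b)) := by
  set T : A →L[ℝ] A := LinearMap.toContinuousLinearMap (br.flip a)
  let ad : A →L[ℝ] A →L[ℝ] A := LinearMap.toContinuousLinearMap
    ((LinearMap.toContinuousLinearMap : (A →ₗ[ℝ] A) ≃ₗ[ℝ] (A →L[ℝ] A)).toLinearMap ∘ₗ br.flip)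
  have hderiv : Semiconj ad T (mul ℝ _ T - (mul ℝ _).flip T) := fun x => by
    ext v
    simp [T, ad, leib v x a]
  calc exp T * ad b * exp (-T) = exp (mul ℝ _ T - (mul ℝ _).flip T) (ad b) :=
        (exp_mul_sub_flip_mul_apply T (ad b)).symm
    _ = ad (exp T b) := (ad.semiconj_exp hderiv b).symm
end

section
/- Let A be a finite-dimensional real Leibniz algebra and define a ◁_s b = e^{s·ad_b}(a) for a,b ∈ A and s ∈ ℝ. Then this operation satisfies the self-distributivity identity (a ◁_t b) ◁_s c = (a ◁_s c) ◁_t (b ◁_s c) for all a,b,c ∈ A and all s,t ∈ ℝ. -/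
/-!
The Leibniz identity says exactly that `ad_c` is a derivation of the bracket, hence so is
`s • ad_c`, and the exponential of a derivation is an automorphism:
`e^{s·ad_c} [x, y] = [e^{s·ad_c} x, e^{s·ad_c} y]`. Read as an operator identity in `y = b`, this
says `e^{s·ad_c} ∘ ad_b = ad_{b ◁_s c} ∘ e^{s·ad_c}`, and scaling by `t` and exponentiating gives
`e^{s·ad_c} ∘ e^{t·ad_b} = e^{t·ad_{b ◁_s c}} ∘ e^{s·ad_c}`, which applied to `a` is the claim.
-/

open NormedSpace

/-- The exponential rack operation `a ◁_s b = e^{s·ad_b}(a)` on a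
finite-dimensional real Leibniz algebra with bracket `br` (`ad_b a = br a b`). -/
noncomputable def leibnizRackOp
    {A : Type*} [NormedAddCommGroup A] [NormedSpace ℝ A] [FiniteDimensional ℝ A]
    (br : A →ₗ[ℝ] A →ₗ[ℝ] A) (s : ℝ) (a b : A) : A :=
  exp (s • LinearMap.toContinuousLinearMap (br.flip b)) a

section ExpDerivation

variable {𝕂 E F G : Type*} [RCLike 𝕂]
  [NormedAddCommGroup E] [NormedSpace 𝕂 E] [CompleteSpace E]
  [NormedAddCommGroup F] [NormedSpace 𝕂 F] [CompleteSpace F]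
  [NormedAddCommGroup G] [NormedSpace 𝕂 G] [CompleteSpace G]

theorem hasDerivAt_exp_smul_apply (D : E →L[𝕂] E) (x : E) (t : 𝕂) :
    HasDerivAt (fun u : 𝕂 => exp (u • D) x) (D (exp (t • D) x)) t := by
  simpa using (hasDerivAt_exp_smul_const' D t).clm_apply (hasDerivAt_const t x)

theorem exp_apply_apply_of_derivation (B : E →L[𝕂] F →L[𝕂] G) {D₁ : E →L[𝕂] E}
    {D₂ : F →L[𝕂] F} {D₃ : G →L[𝕂] G} (hD : ∀ x y, D₃ (B x y) = B (D₁ x) y + B x (D₂ y))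
    (x : E) (y : F) : exp D₃ (B x y) = B (exp D₁ x) (exp D₂ y) := by
  -- `φ` interpolates between the two sides; the derivation rule makes its derivative vanish.
  set φ : 𝕂 → G := fun t => exp ((1 - t) • D₃) (B (exp (t • D₁) x) (exp (t • D₂) y))
  have hφ (t : 𝕂) : HasDerivAt φ 0 t := by
    have h := ((hasDerivAt_exp_smul_const D₃ (1 - t)).scomp t
      ((hasDerivAt_id t).const_sub 1)).clm_apply
      (B.hasDerivAt_of_bilinear (fun _ => hasDerivAt_exp_smul_apply D₁ x t)
        (fun _ => hasDerivAt_exp_smul_apply D₂ y t))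
    refine h.congr_deriv ?_
    simp only [neg_smul, one_smul, neg_apply, mul_apply_eq_comp, Function.comp_apply,
      add_comm (B _ (D₂ _)), ← hD, neg_add_cancel]
  have hconst : φ 0 = φ 1 :=
    is_const_of_deriv_eq_zero (fun t => (hφ t).differentiableAt) (fun t => (hφ t).deriv) 0 1
  simpa [φ] using hconst

end ExpDerivation

namespace LeibnizAlgebra

variable {A : Type*} [NormedAddCommGroup A] [NormedSpace ℝ A] [FiniteDimensional ℝ A]
  (br : A →ₗ[ℝ] A →ₗ[ℝ] A)

noncomputable def bracketCLM : A →L[ℝ] A →L[ℝ] A :=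
  LinearMap.toContinuousLinearMap (LinearMap.toContinuousLinearMap.toLinearMap ∘ₗ br)

noncomputable def ad (b : A) : A →L[ℝ] A :=
  LinearMap.toContinuousLinearMap (br.flip b)

variable {br}

theorem exp_smul_ad_apply_bracket
    (leib : ∀ x y z : A, br (br x y) z = br (br x z) y + br x (br y z)) (s : ℝ) (c x y : A) :
    exp (s • ad br c) (br x y) = br (exp (s • ad br c) x) (exp (s • ad br c) y) :=
  exp_apply_apply_of_derivation (bracketCLM br)
    (fun x y => by simp [ad, bracketCLM, leib x y c]) x y

theorem semiconjBy_exp_smul_ad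
    (leib : ∀ x y z : A, br (br x y) z = br (br x z) y + br x (br y z)) (s : ℝ) (b c : A) :
    SemiconjBy (exp (s • ad br c)) (ad br b) (ad br (exp (s • ad br c) b)) :=
  ContinuousLinearMap.ext fun a => exp_smul_ad_apply_bracket leib s c a b

theorem exp_smul_ad_mul_exp_smul_ad
    (leib : ∀ x y z : A, br (br x y) z = br (br x z) y + br x (br y z)) (s t : ℝ) (b c : A) :
    exp (s • ad br c) * exp (t • ad br b) =
      exp (t • ad br (exp (s • ad br c) b)) * exp (s • ad br c) :=
  letI : NormedAlgebra ℚ (A →L[ℝ] A) := .restrictScalars ℚ ℝ _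
  ((semiconjBy_exp_smul_ad leib s b c).smul_right t).exp_right

end LeibnizAlgebra

/-- the exponential rack operation is self-distributive:
`(a ◁_t b) ◁_s c = (a ◁_s c) ◁_t (b ◁_s c)`. -/
theorem leibnizRackOp_self_distrib
    {A : Type*} [NormedAddCommGroup A] [NormedSpace ℝ A] [FiniteDimensional ℝ A]
    (br : A →ₗ[ℝ] A →ₗ[ℝ] A)
    (leib : ∀ x y z : A, br (br x y) z = br (br x z) y + br x (br y z))
    (a b c : A) (s t : ℝ) :
    leibnizRackOp br s (leibnizRackOp br t a b) c =
      leibnizRackOp br t (leibnizRackOp br s a c) (leibnizRackOp br s b c) :=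
  congr($(LeibnizAlgebra.exp_smul_ad_mul_exp_smul_ad leib s t b c) a)
end

section
/- Let G be a group, R a ring, and Q a right R[G]-module. Define p ◁_g q = p·g + q·(1−g). Then (Q, {◁_g}) is a G-family of quandles: (1) q ◁_g q = q for all q, g; (2) (q ◁_g p) ◁_h p = q ◁_{gh} p and q ◁_e p = q; (3) (q ◁_g p) ◁_h r = (q ◁_h r) ◁_{h⁻¹gh} (p ◁_h r). -/
/-- The Alexander-type operation `p ◁_g q = p·g + q·(1−g)` on a right `R[G]`-module
`Q` (a module over the opposite of the group ring). -/
noncomputable def groupRingFamOp (R : Type*) {G Q : Type*} [Ring R] [Group G]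
    [AddCommGroup Q] [Module (MonoidAlgebra R G)ᵐᵒᵖ Q] (g : G) (p q : Q) : Q :=
  (MulOpposite.op ((MonoidAlgebra.of R G) g)) • p +
    (MulOpposite.op ((1 : MonoidAlgebra R G) - (MonoidAlgebra.of R G) g)) • q

open MulOpposite MonoidAlgebra in
lemma opsmul_opsmul {R G Q : Type*} [Ring R] [Group G] [AddCommGroup Q]
    [Module (MonoidAlgebra R G)ᵐᵒᵖ Q] (a b : MonoidAlgebra R G) (x : Q) :
    op a • op b • x = op (b * a) • x := by
  rw [smul_smul, ← op_mul]

open MulOpposite MonoidAlgebra in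
lemma opsmul_add_opsmul {R G Q : Type*} [Ring R] [Group G] [AddCommGroup Q]
    [Module (MonoidAlgebra R G)ᵐᵒᵖ Q] (a b : MonoidAlgebra R G) (x : Q) :
    op a • x + op b • x = op (a + b) • x := by
  rw [op_add, add_smul]

/-- `(Q, {◁_g})` with `p ◁_g q = p·g + q·(1−g)` is a `G`-family of
quandles. -/
theorem groupRingFamOp_is_G_family (R : Type*) {G Q : Type*} [Ring R] [Group G]
    [AddCommGroup Q] [Module (MonoidAlgebra R G)ᵐᵒᵖ Q] :
    (∀ (g : G) (q : Q), groupRingFamOp R g q q = q) ∧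
    (∀ (g h : G) (q p : Q),
      groupRingFamOp R h (groupRingFamOp R g q p) p = groupRingFamOp R (g * h) q p) ∧
    (∀ (q p : Q), groupRingFamOp R (1 : G) q p = q) ∧
    (∀ (g h : G) (q p r : Q),
      groupRingFamOp R h (groupRingFamOp R g q p) r =
        groupRingFamOp R (h⁻¹ * g * h) (groupRingFamOp R h q r)
          (groupRingFamOp R h p r)) := by
  refine ⟨?_, ?_, ?_, ?_⟩
  · intro g q
    rw [groupRingFamOp, opsmul_add_opsmul]
    simp
  · intro g h q p
    simp only [groupRingFamOp, smul_add, opsmul_opsmul, map_mul]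
    rw [add_assoc, opsmul_add_opsmul]
    congr 2
    noncomm_ring
  · intro q p
    simp [groupRingFamOp, ← MonoidAlgebra.one_def]
  · intro g h q p r
    simp only [groupRingFamOp, smul_add, opsmul_opsmul, map_mul, sub_mul, mul_sub,
      one_mul, mul_one, ← map_mul, mul_assoc, mul_inv_cancel_left, inv_mul_cancel_left,
      mul_inv_cancel, inv_mul_cancel, sub_smul, smul_sub, MulOpposite.op_sub, one_smul,
      map_one]
    abel
end

section
/- Let (Q, {◁_g}_{g∈G}) be a G-family of quandles. Define on Q × G the operation (p,g) * (q,h) = (p ◁_h q, h⁻¹gh). Then (Q × G, *) is a quandle: * is right self-distributive, each right translation is a bijection, and (p,g)*(p,g) = (p,g). -/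
/-- if `(Q, {◁_g})` is a `G`-family of quandles, then
`(p,g) * (q,h) = (p ◁_h q, h⁻¹gh)` makes `Q × G` a quandle. -/
theorem assoc_quandle_of_G_family
    {Q G : Type*} [Group G] (op : G → Q → Q → Q)
    (hidem : ∀ (g : G) (q : Q), op g q q = q)
    (hcomp : ∀ (g h : G) (q p : Q), op h (op g q p) p = op (g * h) q p)
    (hone : ∀ q p : Q, op (1 : G) q p = q)
    (hdist : ∀ (g h : G) (q p r : Q),
      op h (op g q p) r = op (h⁻¹ * g * h) (op h q r) (op h p r)) :
    (∀ a b c : Q × G,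
      (fun x y : Q × G => (op y.2 x.1 y.1, y.2⁻¹ * x.2 * y.2))
          ((fun x y : Q × G => (op y.2 x.1 y.1, y.2⁻¹ * x.2 * y.2)) a b) c =
        (fun x y : Q × G => (op y.2 x.1 y.1, y.2⁻¹ * x.2 * y.2))
            ((fun x y : Q × G => (op y.2 x.1 y.1, y.2⁻¹ * x.2 * y.2)) a c)
            ((fun x y : Q × G => (op y.2 x.1 y.1, y.2⁻¹ * x.2 * y.2)) b c)) ∧
    (∀ b : Q × G,
      Function.Bijective
        (fun a : Q × G => (op b.2 a.1 b.1, b.2⁻¹ * a.2 * b.2))) ∧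
    (∀ a : Q × G, (op a.2 a.1 a.1, a.2⁻¹ * a.2 * a.2) = a) := by
  refine ⟨?_, ?_, ?_⟩
  · intro a b c
    simp only [Prod.mk.injEq]
    constructor
    · exact hdist b.2 c.2 a.1 b.1 c.1
    · group
  · intro b
    refine Function.bijective_iff_has_inverse.mpr
      ⟨fun a => (op b.2⁻¹ a.1 b.1, b.2 * a.2 * b.2⁻¹), ?_, ?_⟩
    · intro a
      simp only [hcomp, mul_inv_cancel, hone]
      ext <;> simp <;> group
    · intro a
      simp only [hcomp, inv_mul_cancel, hone]
      ext <;> simp <;> group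
  · intro a
    simp [hidem]
end

section
/- Let F be a group, H ≤ F a subgroup, and ρ : G → Aut(F) an action with ρ_g(H) ⊆ H, satisfying additionally: for all f ∈ F and g ∈ G, f⁻¹ρ_g(f) ∈ H implies fρ_g(f⁻¹) ∈ H. Then the G-family of quandles on F/H defined by f'H ◁_g fH = fρ_g(f⁻¹f')H has the first Noether property: for all cosets x, y, (x ◁_g y = x for all g ∈ G) if and only if (y ◁_g x = y for all g ∈ G). -/
/-- under the additional hypothesis that `f⁻¹ρ_g(f) ∈ H` implies
`fρ_g(f⁻¹) ∈ H`, the coset `G`-family of quandles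
`f'H ◁_g fH = fρ_g(f⁻¹f')H` has the first Noether property. -/
theorem coset_G_family_noether
    {F G : Type*} [Group F] [Group G] (H : Subgroup F) (ρ : G →* MulAut F)
    (hH : ∀ (g : G), ∀ h ∈ H, ρ g h ∈ H)
    (hkey : ∀ (f : F) (g : G), f⁻¹ * ρ g f ∈ H → f * ρ g f⁻¹ ∈ H) :
    ∀ op : G → F ⧸ H → F ⧸ H → F ⧸ H,
      (∀ (g : G) (f f' : F),
        op g ((f' : F ⧸ H)) ((f : F ⧸ H)) = ((f * ρ g (f⁻¹ * f') : F) : F ⧸ H)) →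
      ∀ x y : F ⧸ H, (∀ g : G, op g x y = x) ↔ (∀ g : G, op g y x = y) := by
  intro op hop x y
  -- reduce to representatives
  induction x using QuotientGroup.induction_on with
  | H f' =>
  induction y using QuotientGroup.induction_on with
  | H f =>
  -- key translation: op g ↑f' ↑f = ↑f' iff (f⁻¹f')⁻¹ * ρ g (f⁻¹f') ∈ H
  have trans : ∀ (g : G) (u v : F),
      op g (u : F ⧸ H) (v : F ⧸ H) = (u : F ⧸ H) ↔
        (v⁻¹ * u)⁻¹ * ρ g (v⁻¹ * u) ∈ H := by
    intro g u v
    rw [hop, QuotientGroup.eq]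
    constructor
    · intro h
      have h' := H.inv_mem h
      simpa [mul_assoc, mul_inv_rev] using h'
    · intro h
      have h' := H.inv_mem h
      simpa [mul_assoc, mul_inv_rev] using h'
  have key : ∀ (a : F) (g : G), a⁻¹ * ρ g a ∈ H → a * ρ g a⁻¹ ∈ H := hkey
  constructor
  · intro h g
    have h1 : (f⁻¹ * f')⁻¹ * ρ g (f⁻¹ * f') ∈ H := (trans g f' f).mp (h g)
    have h2 := key (f⁻¹ * f') g h1
    refine (trans g f f').mpr ?_
    simpa [mul_inv_rev, mul_assoc] using h2
  · intro h g
    have h1 : (f'⁻¹ * f)⁻¹ * ρ g (f'⁻¹ * f) ∈ H := (trans g f f').mp (h g)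
    have h2 := key (f'⁻¹ * f) g h1
    refine (trans g f' f).mpr ?_
    simpa [mul_inv_rev, mul_assoc] using h2
end

section
/- Let (R, ◁) be a G-family of racks (satisfying x ◁_e y = x, (x ◁_g y) ◁_h y = x ◁_{gh} y, and (x ◁_g y) ◁_h z = (x ◁_h z) ◁_{h⁻¹gh} (y ◁_h z)) such that there exists g' in the center of G for which the map y ↦ R^{g'}_y (where R^{g'}_y(x) = x ◁_{g'} y) is injective (faithfulness at g'). Then (R, ◁) has the first Noether property: for all x, y ∈ R, (x ◁_g y = x for all g ∈ G) implies (y ◁_g x = y for all g ∈ G). -/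
/-- a `G`-family of racks that is faithful at some central `g'`
has the first Noether property. -/
theorem faithful_central_implies_noether
    {R G : Type*} [Group G] (op : G → R → R → R)
    (hone : ∀ x y : R, op (1 : G) x y = x)
    (hcomp : ∀ (g h : G) (x y : R), op h (op g x y) y = op (g * h) x y)
    (hdist : ∀ (g h : G) (x y z : R),
      op h (op g x y) z = op (h⁻¹ * g * h) (op h x z) (op h y z))
    (g' : G) (hg' : g' ∈ Subgroup.center G)
    (hfaith : ∀ y y' : R, (∀ x : R, op g' x y = op g' x y') → y = y') :
    ∀ x y : R, (∀ g : G, op g x y = x) → (∀ g : G, op g y x = y) := by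
  intro x y hx g
  rw [Subgroup.mem_center_iff] at hg'
  have hc1 : g⁻¹ * g' * g = g' := by
    rw [hg' g⁻¹]; group
  have hc2 : g'⁻¹ * g * g' = g := by
    have : g * g' = g' * g := hg' g
    rw [mul_assoc, this]; group
  apply hfaith
  intro w
  set z := op g⁻¹ w x with hz
  have hw : w = op g z x := by
    rw [hz, hcomp, inv_mul_cancel, hone]
  have e1 : op g' (op g z x) (op g y x) = op g (op g' z y) x := by
    rw [hdist g' g z y x, hc1]
  have e2 : op g' (op g z x) y = op g (op g' z y) x := by
    rw [hdist g g' z x y, hc2, hx g']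
  rw [hw, e1, e2]
end
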